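/- Let p be a prime, let α ∈ ℤ_p be a p-adic unit and let β' ∈ ℤ_p; set β = p·β', a = α + β, ξ = α·β (so that ξ·p^{-1} = α·β') and δ = α − β. Then, in the space of 2×2 matrices over ℚ_p, the sequence n ↦ [[0, p], [−α·β', a]]^{n!} converges entrywise to δ^{-1} · [[−β, p], [−α·β', α]]. -/

import Mathlib

/-!
The matrix `M = [[0, p], [-αβ', α + β]]` with `β = pβ'` satisfies `(M - α)(M - β) = 0`, and
`α ≠ β` because `α` is a unit while `p ∣ β`. Hence `M^m = α^m e_α + β^m e_β` for the spectral
projectors `e_α = (α - β)⁻¹ (M - β)` and `e_β = 1 - e_α`. Along `m = n!` we have `β^{n!} → 0`, and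
`α^{n!} → 1` because `φ(p^k) ∣ n!` for `n ≥ φ(p^k)`, so Euler's theorem in `ℤ/p^k` gives
`α^{n!} ≡ 1 mod p^k`.
-/

open Filter Topology
open scoped Nat

section SpectralDecomposition

variable {K R : Type*} [Field K] [Ring R] [Algebra K R] {M : R} {a b : K}

theorem pow_eq_smul_add_smul_of_mul_sub_algebraMap_eq_zero
    (h : (M - algebraMap K R a) * (M - algebraMap K R b) = 0) (hab : a ≠ b) (m : ℕ) :
    M ^ m = a ^ m • (a - b)⁻¹ • (M - algebraMap K R b) +
      b ^ m • (b - a)⁻¹ • (M - algebraMap K R a) := by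
  have hcomm : Commute (M - algebraMap K R a) (M - algebraMap K R b) :=
    ((Commute.refl M).sub_right (Algebra.commute_algebraMap_right b M)).sub_left
      ((Algebra.commute_algebraMap_left a M).sub_right (Algebra.commute_algebraMap_left a _))
  have hMa : M * (M - algebraMap K R b) = a • (M - algebraMap K R b) := by
    rw [← sub_eq_zero, Algebra.smul_def, ← sub_mul, h]
  have hMb : M * (M - algebraMap K R a) = b • (M - algebraMap K R a) := by
    rw [← sub_eq_zero, Algebra.smul_def, ← sub_mul, ← hcomm.eq, h]
  induction m with
  | zero =>
    simp only [pow_zero, one_smul]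
    rw [← neg_sub a b, inv_neg, neg_smul, ← sub_eq_add_neg, ← smul_sub, sub_sub_sub_cancel_left,
      ← map_sub, Algebra.smul_def, ← map_mul, inv_mul_cancel₀ (sub_ne_zero.2 hab), map_one]
  | succ m ih =>
    rw [pow_succ', ih, mul_add]
    simp only [mul_smul_comm, hMa, hMb]
    module

theorem tendsto_pow_comp_of_mul_sub_algebraMap_eq_zero {ι : Type*} {l : Filter ι} {f : ι → ℕ}
    [TopologicalSpace K] [TopologicalSpace R] [ContinuousSMul K R] [ContinuousAdd R]
    (h : (M - algebraMap K R a) * (M - algebraMap K R b) = 0) (hab : a ≠ b)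
    (ha : Tendsto (fun i => a ^ f i) l (𝓝 1)) (hb : Tendsto (fun i => b ^ f i) l (𝓝 0)) :
    Tendsto (fun i => M ^ f i) l (𝓝 ((a - b)⁻¹ • (M - algebraMap K R b))) := by
  have hlim := (ha.smul_const ((a - b)⁻¹ • (M - algebraMap K R b))).add
    (hb.smul_const ((b - a)⁻¹ • (M - algebraMap K R a)))
  rw [one_smul, zero_smul, add_zero] at hlim
  simpa only [pow_eq_smul_add_smul_of_mul_sub_algebraMap_eq_zero h hab] using hlim

end SpectralDecomposition

namespace Matrix

variable {K : Type*} [CommRing K]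

theorem fin_two_sub_algebraMap (a b c d : K) :
    !![0, c; -d, a + b] - algebraMap K (Matrix (Fin 2) (Fin 2) K) b = !![-b, c; -d, a] := by
  ext i j
  fin_cases i <;> fin_cases j <;> simp [algebraMap_eq_diagonal]

theorem fin_two_mul_sub_algebraMap_eq_zero {a b c d : K} (hcd : c * d = a * b) :
    (!![0, c; -d, a + b] - algebraMap K (Matrix (Fin 2) (Fin 2) K) a) *
      (!![0, c; -d, a + b] - algebraMap K (Matrix (Fin 2) (Fin 2) K) b) = 0 := by
  rw [fin_two_sub_algebraMap, add_comm a b, fin_two_sub_algebraMap]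
  ext i j
  fin_cases i <;> fin_cases j <;> simp <;> grind

end Matrix

namespace PadicInt

variable {p : ℕ} [Fact p.Prime]

theorem toZModPow_pow_factorial_of_isUnit {u : ℤ_[p]} (hu : IsUnit u) {k n : ℕ}
    (hn : φ (p ^ k) ≤ n) : toZModPow k (u ^ n !) = 1 := by
  obtain ⟨j, hj⟩ := Nat.dvd_factorial (Nat.totient_pos.2 (pow_pos (Fact.out : p.Prime).pos k)) hn
  rw [map_pow, ← (hu.map (toZModPow k)).unit_spec, hj, pow_mul, ← Units.val_pow_eq_pow_val,
    ZMod.pow_totient, Units.val_one, one_pow]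

theorem tendsto_pow_factorial_of_isUnit {u : ℤ_[p]} (hu : IsUnit u) :
    Tendsto (fun n => u ^ n !) atTop (𝓝 1) := by
  rw [Metric.tendsto_atTop]
  intro ε hε
  obtain ⟨k, hk⟩ := exists_pow_lt_of_lt_one hε
    (inv_lt_one_of_one_lt₀ (by exact_mod_cast (Fact.out : p.Prime).one_lt : (1 : ℝ) < p))
  refine ⟨φ (p ^ k), fun n hn => ?_⟩
  calc dist (u ^ n !) 1 ≤ (p : ℝ) ^ (-(k : ℤ)) := by
        rw [dist_eq_norm, norm_le_pow_iff_mem_span_pow, ← ker_toZModPow, RingHom.mem_ker,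
          map_sub, toZModPow_pow_factorial_of_isUnit hu hn, map_one, sub_self]
    _ = (p : ℝ)⁻¹ ^ k := by rw [zpow_neg, zpow_natCast, inv_pow]
    _ < ε := hk

end PadicInt

/-- The anti-ordinary projector on the 2-dimensional space on which `U_p^*` acts through
the matrix `[[0, p], [−αβ', a]]`, with `β = p·β'`, `a = α + β`, `α` a `p`-adic unit:
the sequence `n ↦ [[0, p], [−αβ', a]]^{n!}` converges entrywise to
`δ⁻¹ • [[−β, p], [−αβ', α]]` where `δ = α − β`. -/
theorem up_star_matrix_pow_factorial_tendsto (p : ℕ) [Fact p.Prime] (α β' : ℤ_[p])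
    (hα : IsUnit α) :
    Filter.Tendsto
      (fun n : ℕ =>
        (!![0, (p : ℚ_[p]);
            -((α * β' : ℤ_[p]) : ℚ_[p]), ((α + p * β' : ℤ_[p]) : ℚ_[p])]) ^ n.factorial)
      Filter.atTop
      (nhds (((α - p * β' : ℤ_[p]) : ℚ_[p])⁻¹ •
        !![-(((p : ℤ_[p]) * β' : ℤ_[p]) : ℚ_[p]), (p : ℚ_[p]);
           -((α * β' : ℤ_[p]) : ℚ_[p]), (α : ℚ_[p])])) := by
  have hβ : ‖(p : ℤ_[p]) * β'‖ < 1 := (PadicInt.norm_lt_one_iff_dvd _).2 (dvd_mul_right _ _)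
  have hαβ : (α : ℚ_[p]) ≠ ((p * β' : ℤ_[p]) : ℚ_[p]) := fun h =>
    hβ.ne (Subtype.coe_injective h ▸ PadicInt.isUnit_iff.1 hα)
  have hcd : (p : ℚ_[p]) * ((α * β' : ℤ_[p]) : ℚ_[p]) = α * ((p * β' : ℤ_[p]) : ℚ_[p]) := by
    push_cast; ring
  have hlim := tendsto_pow_comp_of_mul_sub_algebraMap_eq_zero
    (Matrix.fin_two_mul_sub_algebraMap_eq_zero hcd) hαβ
    ((continuous_subtype_val.tendsto (1 : ℤ_[p])).comp
      (PadicInt.tendsto_pow_factorial_of_isUnit hα))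
    ((tendsto_pow_atTop_nhds_zero_of_norm_lt_one
      (by rwa [PadicInt.padic_norm_e_of_padicInt])).comp factorial_tendsto_atTop)
  rwa [Matrix.fin_two_sub_algebraMap] at hlim
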